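/- arXiv:1909.08899 — 6 statements merged into one kernel-verified Lean document; each statement's English description precedes it below -/
import Mathlib

section
/- For any mean-zero vector v ∈ R^N_0 indexed by Z/NZ, the discrete Poincaré inequality holds: ‖v‖_{ℓ^2} ≤ ‖D^{(1,+)} v‖_{ℓ^2}, i.e., (1/N)∑_i v_i^2 ≤ (1/N)∑_i N^2 (v_{i+1} − v_i)^2. -/
lemma tel_sum (N : ℕ) [NeZero N] (v : ZMod N → ℝ) (i : ZMod N) (n : ℕ) :
    v (i + n) - v i = ∑ k ∈ Finset.range n, (v (i + k + 1) - v (i + k)) := by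
  induction n with
  | zero => simp
  | succ n ih =>
      have hc : ((n + 1 : ℕ) : ZMod N) = (n : ZMod N) + 1 := by push_cast; ring
      rw [Finset.sum_range_succ, ← ih, hc, ← add_assoc]
      ring

lemma diff_le (N : ℕ) [NeZero N] (v : ZMod N → ℝ) (i j : ZMod N) :
    |v j - v i| ≤ ∑ k : ZMod N, |v (k + 1) - v k| := by
  set n := (j - i).val with hn
  have hj : i + (n : ZMod N) = j := by
    rw [hn, ZMod.natCast_val, ZMod.cast_id]; ring
  calc |v j - v i| = |∑ k ∈ Finset.range n, (v (i + k + 1) - v (i + k))| := by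
        rw [← hj, tel_sum]
    _ ≤ ∑ k ∈ Finset.range n, |v (i + k + 1) - v (i + k)| :=
        Finset.abs_sum_le_sum_abs _ _
    _ = ∑ x ∈ (Finset.range n).image (fun k : ℕ => i + (k : ZMod N)),
          |v (x + 1) - v x| := by
        rw [Finset.sum_image]
        intro a ha b hb hab
        have hN : n < N := ZMod.val_lt (j - i)
        have ha' : a < N := (Finset.mem_range.mp ha).trans hN
        have hb' : b < N := (Finset.mem_range.mp hb).trans hN
        have : (a : ZMod N) = (b : ZMod N) := by
          have := add_left_cancel hab; exact this
        have := congrArg ZMod.val this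
        rwa [ZMod.val_cast_of_lt ha', ZMod.val_cast_of_lt hb'] at this
    _ ≤ ∑ k : ZMod N, |v (k + 1) - v k| := by
        apply Finset.sum_le_sum_of_subset_of_nonneg (Finset.subset_univ _)
        intro k _ _; exact abs_nonneg _

/-- Discrete Poincaré inequality: for a zero-mean vector on the discrete torus,
`(1/N) ∑_i v_i^2 ≤ (1/N) ∑_i N^2 (v_{i+1} - v_i)^2`. -/
theorem discrete_poincare (N : ℕ) [NeZero N] (v : ZMod N → ℝ)
    (hv : ∑ i : ZMod N, v i = 0) :
    (1 / (N : ℝ)) * ∑ i : ZMod N, (v i) ^ 2 ≤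
      (1 / (N : ℝ)) * ∑ i : ZMod N, ((N : ℝ) * (v (i + 1) - v i)) ^ 2 := by
  have hN : (0 : ℝ) < N := by
    exact_mod_cast Nat.pos_of_ne_zero (NeZero.ne N)
  set S : ℝ := ∑ k : ZMod N, |v (k + 1) - v k| with hS
  have card : (Finset.univ : Finset (ZMod N)).card = N := by
    simp [ZMod.card]
  -- pointwise bound |v i| ≤ S
  have hpt : ∀ i : ZMod N, |v i| ≤ S := by
    intro i
    have : (N : ℝ) * v i = ∑ j : ZMod N, (v i - v j) := by
      rw [Finset.sum_sub_distrib, hv, sub_zero, Finset.sum_const, card,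
        nsmul_eq_mul]
    have habs : |(N : ℝ) * v i| ≤ (N : ℝ) * S := by
      rw [this]
      calc |∑ j : ZMod N, (v i - v j)| ≤ ∑ j : ZMod N, |v i - v j| :=
            Finset.abs_sum_le_sum_abs _ _
        _ ≤ ∑ _j : ZMod N, S := Finset.sum_le_sum fun j _ => diff_le N v j i
        _ = (N : ℝ) * S := by rw [Finset.sum_const, card, nsmul_eq_mul]
    rw [abs_mul, abs_of_pos hN] at habs
    exact le_of_mul_le_mul_left habs hN
  -- Cauchy-Schwarz: S^2 ≤ N * ∑ d^2
  have hCS : S ^ 2 ≤ (N : ℝ) * ∑ k : ZMod N, (v (k + 1) - v k) ^ 2 := by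
    have := sq_sum_le_card_mul_sum_sq (s := (Finset.univ : Finset (ZMod N)))
      (f := fun k => |v (k + 1) - v k|)
    simpa [card, sq_abs] using this
  have hmain : ∑ i : ZMod N, (v i) ^ 2 ≤
      ∑ i : ZMod N, ((N : ℝ) * (v (i + 1) - v i)) ^ 2 := by
    calc ∑ i : ZMod N, (v i) ^ 2 ≤ ∑ _i : ZMod N, S ^ 2 :=
          Finset.sum_le_sum fun i _ => by
            have := hpt i
            have h2 : v i ^ 2 = |v i| ^ 2 := (sq_abs _).symm
            rw [h2]
            exact pow_le_pow_left₀ (abs_nonneg _) this 2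
      _ = (N : ℝ) * S ^ 2 := by rw [Finset.sum_const, card, nsmul_eq_mul]
      _ ≤ (N : ℝ) * ((N : ℝ) * ∑ k : ZMod N, (v (k + 1) - v k) ^ 2) :=
          mul_le_mul_of_nonneg_left hCS hN.le
      _ = ∑ i : ZMod N, ((N : ℝ) * (v (i + 1) - v i)) ^ 2 := by
          rw [Finset.mul_sum, Finset.mul_sum]
          exact Finset.sum_congr rfl fun i _ => by ring
  exact mul_le_mul_of_nonneg_left hmain (by positivity)
end

section
/- For any mean-zero vector v ∈ R^N_0 and any even positive integer p, one has ⟨D^{(1,+)}(v^{p-1}), D^{(1,+)} v⟩_{ℓ^2} ≥ (4(p−1)/p^2) · ‖v‖_{ℓ^p}^p, where v^{p-1} denotes the coordinatewise power (v_1^{p-1}, ..., v_N^{p-1}). -/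
open Finset

private noncomputable def gg (m : ℕ) (x : ℝ) : ℝ := if 0 ≤ x then x ^ m else -((-x) ^ m)

private lemma cross_term_le (m k : ℕ) (hk : k ≤ m) (a b : ℝ) (ha : 0 ≤ a) (hb : 0 ≤ b) :
    a ^ k * b ^ (m - k) + a ^ (m - k) * b ^ k ≤ a ^ m + b ^ m := by
  have ea : a ^ k * a ^ (m - k) = a ^ m := by rw [← pow_add]; congr 1; omega
  have eb : b ^ k * b ^ (m - k) = b ^ m := by rw [← pow_add]; congr 1; omega
  have h : 0 ≤ (a ^ k - b ^ k) * (a ^ (m - k) - b ^ (m - k)) := by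
    rcases le_total a b with h | h
    · have h1 : a ^ k ≤ b ^ k := pow_le_pow_left₀ ha h k
      have h2 : a ^ (m - k) ≤ b ^ (m - k) := pow_le_pow_left₀ ha h (m - k)
      nlinarith
    · have h1 : b ^ k ≤ a ^ k := pow_le_pow_left₀ hb h k
      have h2 : b ^ (m - k) ≤ a ^ (m - k) := pow_le_pow_left₀ hb h (m - k)
      nlinarith
  nlinarith

private lemma two_B_le (m' : ℕ) (a b : ℝ) (ha : 0 ≤ a) (hb : 0 ≤ b) :
    2 * (∑ k ∈ range (m' + 1), a ^ k * b ^ (m' - k)) ≤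
      ((m' : ℝ) + 1) * (a ^ m' + b ^ m') := by
  have hrefl : (∑ k ∈ range (m' + 1), a ^ k * b ^ (m' - k)) =
      ∑ k ∈ range (m' + 1), a ^ (m' - k) * b ^ k := by
    rw [← Finset.sum_range_reflect]
    apply Finset.sum_congr rfl
    intro k hk
    simp only [Finset.mem_range] at hk
    have h1 : m' + 1 - 1 - k = m' - k := by omega
    rw [h1]
    rw [show m' - (m' - k) = k from by omega]
  calc 2 * (∑ k ∈ range (m' + 1), a ^ k * b ^ (m' - k))
      = ∑ k ∈ range (m' + 1), (a ^ k * b ^ (m' - k) + a ^ (m' - k) * b ^ k) := by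
        rw [Finset.sum_add_distrib, ← hrefl]; ring
    _ ≤ ∑ _k ∈ range (m' + 1), (a ^ m' + b ^ m') :=
        Finset.sum_le_sum (fun k hk => cross_term_le m' k
          (by simp only [mem_range] at hk; omega) a b ha hb)
    _ = ((m' : ℝ) + 1) * (a ^ m' + b ^ m') := by
        rw [Finset.sum_const, Finset.card_range, nsmul_eq_mul]; push_cast; ring

private lemma B_sq_ge (m' : ℕ) (a b : ℝ) (ha : 0 ≤ a) (hb : 0 ≤ b) :
    ((m' : ℝ) + 1) ^ 2 * (a ^ m' * b ^ m') ≤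
      (∑ k ∈ range (m' + 1), a ^ k * b ^ (m' - k)) ^ 2 := by
  have key := Finset.sum_mul_sq_le_sq_mul_sq (range (m' + 1))
      (fun k => Real.sqrt a ^ k * Real.sqrt b ^ (m' - k))
      (fun k => Real.sqrt a ^ (m' - k) * Real.sqrt b ^ k)
  have sqa : ∀ n : ℕ, (Real.sqrt a ^ n) ^ 2 = a ^ n := by
    intro n; rw [← pow_mul, mul_comm, pow_mul, Real.sq_sqrt ha]
  have sqb : ∀ n : ℕ, (Real.sqrt b ^ n) ^ 2 = b ^ n := by
    intro n; rw [← pow_mul, mul_comm, pow_mul, Real.sq_sqrt hb]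
  have e1 : ∑ k ∈ range (m' + 1),
      (Real.sqrt a ^ k * Real.sqrt b ^ (m' - k)) * (Real.sqrt a ^ (m' - k) * Real.sqrt b ^ k)
      = ((m' : ℝ) + 1) * (Real.sqrt a ^ m' * Real.sqrt b ^ m') := by
    have e0 : ∀ k ∈ range (m' + 1),
        (Real.sqrt a ^ k * Real.sqrt b ^ (m' - k)) * (Real.sqrt a ^ (m' - k) * Real.sqrt b ^ k)
          = Real.sqrt a ^ m' * Real.sqrt b ^ m' := by
      intro k hk
      simp only [mem_range] at hk
      rw [show (Real.sqrt a ^ k * Real.sqrt b ^ (m' - k)) * (Real.sqrt a ^ (m' - k) * Real.sqrt b ^ k)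
          = (Real.sqrt a ^ k * Real.sqrt a ^ (m' - k)) * (Real.sqrt b ^ (m' - k) * Real.sqrt b ^ k) from by ring,
        ← pow_add, ← pow_add, show k + (m' - k) = m' from by omega, show m' - k + k = m' from by omega]
    rw [Finset.sum_congr rfl e0, Finset.sum_const, Finset.card_range, nsmul_eq_mul]
    push_cast; ring
  have e2 : ∑ k ∈ range (m' + 1), (Real.sqrt a ^ k * Real.sqrt b ^ (m' - k)) ^ 2
      = ∑ k ∈ range (m' + 1), a ^ k * b ^ (m' - k) := by
    apply Finset.sum_congr rfl; intro k hk
    rw [mul_pow, sqa, sqb]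
  have e3 : ∑ k ∈ range (m' + 1), (Real.sqrt a ^ (m' - k) * Real.sqrt b ^ k) ^ 2
      = ∑ k ∈ range (m' + 1), a ^ k * b ^ (m' - k) := by
    rw [← Finset.sum_range_reflect]
    apply Finset.sum_congr rfl; intro k hk
    simp only [mem_range] at hk
    rw [mul_pow, sqa, sqb, show m' + 1 - 1 - k = m' - k from by omega,
      show m' - (m' - k) = k from by omega]
  rw [e1, e2, e3] at key
  calc ((m' : ℝ) + 1) ^ 2 * (a ^ m' * b ^ m')
      = (((m' : ℝ) + 1) * (Real.sqrt a ^ m' * Real.sqrt b ^ m')) ^ 2 := by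
        rw [mul_pow, mul_pow, sqa, sqb]
    _ ≤ _ := by
        have := key
        calc (((m' : ℝ) + 1) * (Real.sqrt a ^ m' * Real.sqrt b ^ m')) ^ 2
            ≤ (∑ k ∈ range (m' + 1), a ^ k * b ^ (m' - k)) *
              (∑ k ∈ range (m' + 1), a ^ k * b ^ (m' - k)) := this
          _ = (∑ k ∈ range (m' + 1), a ^ k * b ^ (m' - k)) ^ 2 := (sq _).symm

section
variable (m' : ℕ) (a b : ℝ)

private lemma idA (m' : ℕ) (a b : ℝ) :
    (∑ k ∈ range (m' + 1), a ^ k * b ^ (m' - k)) * (a ^ m' + b ^ m')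
      = (∑ j ∈ range (2 * m' + 1), a ^ j * b ^ (2 * m' - j)) + a ^ m' * b ^ m' := by
  have e1 : (∑ k ∈ range (m' + 1), a ^ k * b ^ (m' - k)) * b ^ m'
      = ∑ j ∈ range (m' + 1), a ^ j * b ^ (2 * m' - j) := by
    rw [Finset.sum_mul]
    apply Finset.sum_congr rfl; intro k hk
    simp only [mem_range] at hk
    rw [mul_assoc, ← pow_add, show m' - k + m' = 2 * m' - k from by omega]
  have e2 : (∑ k ∈ range (m' + 1), a ^ k * b ^ (m' - k)) * a ^ m'
      = (∑ i ∈ range m', a ^ (m' + 1 + i) * b ^ (2 * m' - (m' + 1 + i))) + a ^ m' * b ^ m' := by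
    rw [Finset.sum_mul, Finset.sum_range_succ']
    congr 1
    · apply Finset.sum_congr rfl; intro i hi
      simp only [mem_range] at hi
      rw [show a ^ (m' + 1 + i) = a ^ (i + 1) * a ^ m' from by
            rw [← pow_add]; congr 1; omega,
          show 2 * m' - (m' + 1 + i) = m' - (i + 1) from by omega]
      ring
    · simp [mul_comm]
  have hsplit : (∑ j ∈ range (2 * m' + 1), a ^ j * b ^ (2 * m' - j))
      = (∑ j ∈ range (m' + 1), a ^ j * b ^ (2 * m' - j))
        + ∑ i ∈ range m', a ^ (m' + 1 + i) * b ^ (2 * m' - (m' + 1 + i)) := by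
    rw [show 2 * m' + 1 = (m' + 1) + m' from by omega, Finset.sum_range_add]
  rw [mul_add, e1, e2, hsplit]
  ring

private lemma key_nonneg (m' : ℕ) (a b : ℝ) (ha : 0 ≤ a) (hb : 0 ≤ b) :
    (2 * (m' : ℝ) + 1) * (a ^ (m' + 1) - b ^ (m' + 1)) ^ 2 ≤
      ((m' : ℝ) + 1) ^ 2 * ((a ^ (2 * m' + 1) - b ^ (2 * m' + 1)) * (a - b)) := by
  set B := ∑ k ∈ range (m' + 1), a ^ k * b ^ (m' - k) with hB
  set A := ∑ j ∈ range (2 * m' + 1), a ^ j * b ^ (2 * m' - j) with hA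
  have hBnn : 0 ≤ B := Finset.sum_nonneg fun k _ => mul_nonneg (pow_nonneg ha _) (pow_nonneg hb _)
  have fac1 : B * (a - b) = a ^ (m' + 1) - b ^ (m' + 1) := by
    have := geom_sum₂_mul a b (m' + 1)
    simpa using this
  have fac2 : A * (a - b) = a ^ (2 * m' + 1) - b ^ (2 * m' + 1) := by
    have := geom_sum₂_mul a b (2 * m' + 1)
    simpa using this
  have h2B := two_B_le m' a b ha hb
  have hB2 := B_sq_ge m' a b ha hb
  rw [← hB] at h2B hB2
  have hid := idA m' a b
  rw [← hB, ← hA] at hid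
  have core : (2 * (m' : ℝ) + 1) * B ^ 2 ≤ ((m' : ℝ) + 1) ^ 2 * A := by
    have F1 : 0 ≤ B * (((m' : ℝ) + 1) * (a ^ m' + b ^ m') - 2 * B) :=
      mul_nonneg hBnn (by linarith)
    nlinarith [hB2, F1, hid]
  calc (2 * (m' : ℝ) + 1) * (a ^ (m' + 1) - b ^ (m' + 1)) ^ 2
      = ((2 * (m' : ℝ) + 1) * B ^ 2) * (a - b) ^ 2 := by rw [← fac1]; ring
    _ ≤ (((m' : ℝ) + 1) ^ 2 * A) * (a - b) ^ 2 :=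
        mul_le_mul_of_nonneg_right core (sq_nonneg _)
    _ = ((m' : ℝ) + 1) ^ 2 * ((a ^ (2 * m' + 1) - b ^ (2 * m' + 1)) * (a - b)) := by
        rw [← fac2]; ring
end

private lemma key_mixed (m' : ℕ) (x y : ℝ) (hx : 0 ≤ x) (hy : 0 ≤ y) :
    (2 * (m' : ℝ) + 1) * (x ^ (m' + 1) + y ^ (m' + 1)) ^ 2 ≤
      ((m' : ℝ) + 1) ^ 2 * ((x ^ (2 * m' + 1) + y ^ (2 * m' + 1)) * (x + y)) := by
  have ex1 : x ^ (m' + 1) = x ^ m' * x := by rw [pow_succ]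
  have ey1 : y ^ (m' + 1) = y ^ m' * y := by rw [pow_succ]
  have ex2 : x ^ (2 * m' + 1) = (x ^ m') ^ 2 * x := by
    rw [pow_succ, ← pow_mul]; congr 2; omega
  have ey2 : y ^ (2 * m' + 1) = (y ^ m') ^ 2 * y := by
    rw [pow_succ, ← pow_mul]; congr 2; omega
  rw [ex1, ey1, ex2, ey2]
  have hX : 0 ≤ x ^ m' := pow_nonneg hx _
  have hY : 0 ≤ y ^ m' := pow_nonneg hy _
  have hAM : 0 ≤ x * y * (x ^ m' - y ^ m') ^ 2 := mul_nonneg (mul_nonneg hx hy) (sq_nonneg _)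
  have hc : (2 * (m' : ℝ) + 1) ≤ ((m' : ℝ) + 1) ^ 2 := by nlinarith [sq_nonneg (m' : ℝ)]
  nlinarith [hAM, hc, mul_nonneg (mul_nonneg hX hX) (mul_nonneg hx hx),
    mul_nonneg (mul_nonneg hY hY) (mul_nonneg hy hy),
    mul_nonneg (mul_nonneg hX hY) (mul_nonneg hx hy),
    sq_nonneg (x ^ m' * x - y ^ m' * y), sq_nonneg (x ^ m' * x + y ^ m' * y),
    mul_nonneg (mul_nonneg (mul_nonneg hX hX) hx) hy,
    mul_nonneg (mul_nonneg (mul_nonneg hY hY) hy) hx]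

private lemma hodd (m' : ℕ) : Odd (2 * m' + 1) := ⟨m', by ring⟩

private lemma key_mixed_s (m' : ℕ) (a b : ℝ) (ha : 0 ≤ a) (hb : b < 0) :
    (2 * (m' : ℝ) + 1) * (gg (m' + 1) a - gg (m' + 1) b) ^ 2 ≤
      ((m' : ℝ) + 1) ^ 2 * ((a ^ (2 * m' + 1) - b ^ (2 * m' + 1)) * (a - b)) := by
  simp only [gg, if_pos ha, if_neg (not_le.mpr hb)]
  rw [sub_neg_eq_add,
    show a - b = a + -b from by ring,
    show a ^ (2 * m' + 1) - b ^ (2 * m' + 1) = a ^ (2 * m' + 1) + (-b) ^ (2 * m' + 1) from by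
      rw [Odd.neg_pow (hodd m')]; ring]
  exact key_mixed m' a (-b) ha (by linarith)

private lemma key_all (m' : ℕ) (a b : ℝ) :
    (2 * (m' : ℝ) + 1) * (gg (m' + 1) a - gg (m' + 1) b) ^ 2 ≤
      ((m' : ℝ) + 1) ^ 2 * ((a ^ (2 * m' + 1) - b ^ (2 * m' + 1)) * (a - b)) := by
  rcases le_or_gt 0 a with ha | ha <;> rcases le_or_gt 0 b with hb | hb
  · simp only [gg, if_pos ha, if_pos hb]
    exact key_nonneg m' a b ha hb
  · exact key_mixed_s m' a b ha hb
  · have h := key_mixed_s m' b a hb ha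
    rw [show (gg (m' + 1) a - gg (m' + 1) b) ^ 2 = (gg (m' + 1) b - gg (m' + 1) a) ^ 2 from by ring,
      show (a ^ (2 * m' + 1) - b ^ (2 * m' + 1)) * (a - b)
        = (b ^ (2 * m' + 1) - a ^ (2 * m' + 1)) * (b - a) from by ring]
    exact h
  · have h := key_nonneg m' (-b) (-a) (by linarith) (by linarith)
    simp only [gg, if_neg (not_le.mpr ha), if_neg (not_le.mpr hb)]
    rw [show (-((-a) ^ (m' + 1)) - -((-b) ^ (m' + 1))) ^ 2
        = ((-b) ^ (m' + 1) - (-a) ^ (m' + 1)) ^ 2 from by ring,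
      show (a ^ (2 * m' + 1) - b ^ (2 * m' + 1)) * (a - b)
        = ((-b) ^ (2 * m' + 1) - (-a) ^ (2 * m' + 1)) * (-b - -a) from by
        rw [Odd.neg_pow (hodd m'), Odd.neg_pow (hodd m')]; ring]
    exact h

private lemma gg_sq (m : ℕ) (x : ℝ) : (gg m x) ^ 2 = x ^ (2 * m) := by
  unfold gg
  split_ifs with h
  · rw [← pow_mul]; congr 1; omega
  · rw [neg_sq, ← pow_mul, show m * 2 = 2 * m from by omega, pow_mul, neg_sq, ← pow_mul]

private lemma gg_nonneg (m : ℕ) (x : ℝ) (hx : 0 ≤ x) : 0 ≤ gg m x := by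
  unfold gg; rw [if_pos hx]; exact pow_nonneg hx _

private lemma gg_nonpos (m : ℕ) (hm : m ≠ 0) (x : ℝ) (hx : x ≤ 0) : gg m x ≤ 0 := by
  unfold gg
  split_ifs with h
  · have : x = 0 := le_antisymm hx h
    subst this
    rw [zero_pow hm]
  · have : 0 ≤ (-x) ^ m := pow_nonneg (by linarith [not_le.mp h]) _
    linarith

private lemma telescope_bound (N : ℕ) [NeZero N] (w : ZMod N → ℝ) (i0 : ZMod N)
    (h0 : w i0 * w (i0 + 1) ≤ 0) (j : ZMod N) :
    |w j| ≤ ∑ i : ZMod N, |w (i + 1) - w i| := by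
  set t := (j - (i0 + 1)).val with ht
  have htN : t < N := ZMod.val_lt _
  have hjt : j = i0 + 1 + ((t : ℕ) : ZMod N) := by
    rw [ht, ZMod.natCast_zmod_val]; ring
  have tel : w j = w (i0 + 1) +
      ∑ s ∈ Finset.range t, (w (i0 + 1 + ((s + 1 : ℕ) : ZMod N)) - w (i0 + 1 + ((s : ℕ) : ZMod N))) := by
    rw [Finset.sum_range_sub (fun s : ℕ => w (i0 + 1 + ((s : ℕ) : ZMod N))) t]
    rw [← hjt]
    simp
  have h1 : |w (i0 + 1)| ≤ |w (i0 + 1) - w i0| := by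
    rw [← sq_le_sq ] at *
    · nlinarith [h0]
  have h2 : |w j| ≤ |w (i0 + 1)| + ∑ s ∈ Finset.range t, |w (i0 + 1 + ((s + 1 : ℕ) : ZMod N)) - w (i0 + 1 + ((s : ℕ) : ZMod N))| := by
    rw [tel]
    calc |w (i0 + 1) + ∑ s ∈ Finset.range t, (w (i0 + 1 + ((s + 1 : ℕ) : ZMod N)) - w (i0 + 1 + ((s : ℕ) : ZMod N)))|
        ≤ |w (i0 + 1)| + |∑ s ∈ Finset.range t, (w (i0 + 1 + ((s + 1 : ℕ) : ZMod N)) - w (i0 + 1 + ((s : ℕ) : ZMod N)))| := abs_add_le _ _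
      _ ≤ _ := by
          gcongr
          exact Finset.abs_sum_le_sum_abs _ _
  have h3 : |w (i0 + 1)| + ∑ s ∈ Finset.range t, |w (i0 + 1 + ((s + 1 : ℕ) : ZMod N)) - w (i0 + 1 + ((s : ℕ) : ZMod N))|
      ≤ ∑ s ∈ Finset.range (t + 1), |w (i0 + ((s : ℕ) : ZMod N) + 1) - w (i0 + ((s : ℕ) : ZMod N))| := by
    rw [Finset.sum_range_succ' (fun s : ℕ => |w (i0 + ((s : ℕ) : ZMod N) + 1) - w (i0 + ((s : ℕ) : ZMod N))|) t]
    push_cast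
    have e0 : i0 + (0 : ZMod N) + 1 = i0 + 1 := by ring
    have ee : ∀ s : ℕ, i0 + ((s : ZMod N) + 1) + 1 = i0 + 1 + ((s : ZMod N) + 1) := by intro s; ring
    have ee2 : ∀ s : ℕ, i0 + ((s : ZMod N) + 1) = i0 + 1 + (s : ZMod N) := by intro s; ring
    rw [e0]
    simp only [add_zero]
    have : ∀ s ∈ Finset.range t,
        |w (i0 + ((s : ZMod N) + 1) + 1) - w (i0 + ((s : ZMod N) + 1))|
          = |w (i0 + 1 + ((s : ZMod N) + 1)) - w (i0 + 1 + (s : ZMod N))| := by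
      intro s _; rw [ee s, ee2 s]
    rw [Finset.sum_congr rfl this]
    linarith [h1]
  have h4 : ∑ s ∈ Finset.range (t + 1), |w (i0 + ((s : ℕ) : ZMod N) + 1) - w (i0 + ((s : ℕ) : ZMod N))|
      ≤ ∑ i : ZMod N, |w (i + 1) - w i| := by
    have hinj : ∀ x ∈ Finset.range (t + 1), ∀ y ∈ Finset.range (t + 1),
        (fun s : ℕ => i0 + ((s : ℕ) : ZMod N)) x = (fun s : ℕ => i0 + ((s : ℕ) : ZMod N)) y → x = y := by
      intro x hx y hy hxy
      simp only [Finset.mem_range] at hx hy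
      have hcast : ((x : ℕ) : ZMod N) = ((y : ℕ) : ZMod N) := add_left_cancel hxy
      have hx' : ((x : ℕ) : ZMod N).val = x := ZMod.val_cast_of_lt (by omega)
      have hy' : ((y : ℕ) : ZMod N).val = y := ZMod.val_cast_of_lt (by omega)
      rw [← hx', ← hy', hcast]
    have himg : ∑ i ∈ (Finset.range (t + 1)).image (fun s : ℕ => i0 + ((s : ℕ) : ZMod N)),
        |w (i + 1) - w i| = ∑ s ∈ Finset.range (t + 1), |w (i0 + ((s : ℕ) : ZMod N) + 1) - w (i0 + ((s : ℕ) : ZMod N))| :=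
      Finset.sum_image hinj
    calc ∑ s ∈ Finset.range (t + 1), |w (i0 + ((s : ℕ) : ZMod N) + 1) - w (i0 + ((s : ℕ) : ZMod N))|
        = ∑ i ∈ (Finset.range (t + 1)).image (fun s : ℕ => i0 + ((s : ℕ) : ZMod N)), |w (i + 1) - w i| := himg.symm
      _ ≤ ∑ i : ZMod N, |w (i + 1) - w i| :=
          Finset.sum_le_sum_of_subset_of_nonneg (Finset.subset_univ _) (fun _ _ _ => abs_nonneg _)
  linarith

private lemma poincare_sum (N : ℕ) [NeZero N] (w : ZMod N → ℝ) (i0 : ZMod N)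
    (h0 : w i0 * w (i0 + 1) ≤ 0) :
    ∑ j : ZMod N, (w j) ^ 2 ≤ (N : ℝ) ^ 2 * ∑ i : ZMod N, (w (i + 1) - w i) ^ 2 := by
  have hD : (∑ i : ZMod N, |w (i + 1) - w i|) ^ 2 ≤ (N : ℝ) * ∑ i : ZMod N, (w (i + 1) - w i) ^ 2 := by
    have h := Finset.sum_mul_sq_le_sq_mul_sq Finset.univ (fun _ : ZMod N => (1 : ℝ))
      (fun i => |w (i + 1) - w i|)
    simp only [one_mul, one_pow, sq_abs, Finset.sum_const, nsmul_eq_mul, mul_one,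
      Finset.card_univ, ZMod.card] at h
    exact h
  calc ∑ j : ZMod N, (w j) ^ 2
      ≤ ∑ _j : ZMod N, ((N : ℝ) * ∑ i : ZMod N, (w (i + 1) - w i) ^ 2) := by
        apply Finset.sum_le_sum
        intro j _
        calc (w j) ^ 2 = |w j| ^ 2 := (sq_abs _).symm
          _ ≤ (∑ i : ZMod N, |w (i + 1) - w i|) ^ 2 := by
              apply pow_le_pow_left₀ (abs_nonneg _) (telescope_bound N w i0 h0 j)
          _ ≤ _ := hD
    _ = (N : ℝ) ^ 2 * ∑ i : ZMod N, (w (i + 1) - w i) ^ 2 := by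
        rw [Finset.sum_const, Finset.card_univ, ZMod.card, nsmul_eq_mul]; ring

private lemma exists_sign_change (N : ℕ) [NeZero N] (v : ZMod N → ℝ)
    (hv : ∑ i : ZMod N, v i = 0) : ∃ i0 : ZMod N, v i0 * v (i0 + 1) ≤ 0 := by
  by_contra hc
  push_neg at hc
  have key : ∀ i : ZMod N, (0 < v i ↔ 0 < v (i + 1)) := by
    intro i
    rcases mul_pos_iff.mp (hc i) with ⟨h1, h2⟩ | ⟨h1, h2⟩
    · exact ⟨fun _ => h2, fun _ => h1⟩
    · constructor <;> intro h <;> linarith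
  have hstep : ∀ t : ℕ, (0 < v 0 ↔ 0 < v ((t : ℕ) : ZMod N)) := by
    intro t
    induction t with
    | zero => simp
    | succ n ih =>
        rw [ih]
        push_cast
        exact key _
  have hall : ∀ i : ZMod N, (0 < v 0 ↔ 0 < v i) := by
    intro i
    have := hstep i.val
    rwa [ZMod.natCast_zmod_val] at this
  have hne : ∀ i : ZMod N, v i ≠ 0 := by
    intro i h0
    have := hc i
    rw [h0] at this
    simp at this
  rcases lt_or_gt_of_ne (hne 0) with h | h
  · have hneg : ∀ i : ZMod N, v i < 0 := by
      intro i
      rcases lt_trichotomy (v i) 0 with h' | h' | h'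
      · exact h'
      · exact absurd h' (hne i)
      · exact absurd ((hall i).mpr h') (by linarith)
    have : ∑ i : ZMod N, v i < ∑ _i : ZMod N, (0 : ℝ) :=
      Finset.sum_lt_sum_of_nonempty Finset.univ_nonempty (fun i _ => hneg i)
    simp [hv] at this
  · have hpos : ∀ i : ZMod N, 0 < v i := fun i => (hall i).mp h
    have : ∑ _i : ZMod N, (0 : ℝ) < ∑ i : ZMod N, v i :=
      Finset.sum_lt_sum_of_nonempty Finset.univ_nonempty (fun i _ => hpos i)
    simp [hv] at this


/-- ℓ^p Poincaré inequality for the discrete derivative: for any zero-mean vector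
`v` and even positive integer `p`,
`⟨D^{(1,+)}(v^{p-1}), D^{(1,+)} v⟩ ≥ (4(p-1)/p^2) ‖v‖_{ℓ^p}^p`. -/
theorem discrete_lp_poincare (N : ℕ) [NeZero N] (v : ZMod N → ℝ)
    (hv : ∑ i : ZMod N, v i = 0) (p : ℕ) (hp : Even p) (hp0 : 0 < p) :
    (4 * ((p : ℝ) - 1) / (p : ℝ) ^ 2) * ((1 / (N : ℝ)) * ∑ i : ZMod N, |v i| ^ p) ≤
      (1 / (N : ℝ)) * ∑ i : ZMod N,
        ((N : ℝ) * ((v (i + 1)) ^ (p - 1) - (v i) ^ (p - 1))) *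
          ((N : ℝ) * (v (i + 1) - v i)) := by
  obtain ⟨m, rfl⟩ := hp
  obtain ⟨m', rfl⟩ : ∃ k, m = k + 1 := ⟨m - 1, by omega⟩
  have hps : m' + 1 + (m' + 1) - 1 = 2 * m' + 1 := by omega
  have hNnn : (0 : ℝ) ≤ 1 / (N : ℝ) := by positivity
  set w : ZMod N → ℝ := fun i => gg (m' + 1) (v i) with hw
  obtain ⟨i0, hi0⟩ := exists_sign_change N v hv
  have hw0 : w i0 * w (i0 + 1) ≤ 0 := by
    rcases mul_nonpos_iff.mp hi0 with ⟨h1, h2⟩ | ⟨h1, h2⟩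
    · exact mul_nonpos_iff.mpr (Or.inl ⟨gg_nonneg _ _ h1, gg_nonpos _ (by omega) _ h2⟩)
    · exact mul_nonpos_iff.mpr (Or.inr ⟨gg_nonpos _ (by omega) _ h1, gg_nonneg _ _ h2⟩)
  have hpoin := poincare_sum N w i0 hw0
  have habs : ∀ i : ZMod N, |v i| ^ (m' + 1 + (m' + 1)) = (w i) ^ 2 := by
    intro i
    rw [Even.pow_abs ⟨m' + 1, rfl⟩]
    have : (w i) ^ 2 = (v i) ^ (2 * (m' + 1)) := gg_sq (m' + 1) (v i)
    rw [this]
    congr 1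
    omega
  have hS1 : ∑ i : ZMod N, |v i| ^ (m' + 1 + (m' + 1)) = ∑ i : ZMod N, (w i) ^ 2 :=
    Finset.sum_congr rfl (fun i _ => habs i)
  have hkey : ∀ i : ZMod N, (2 * (m' : ℝ) + 1) / ((m' : ℝ) + 1) ^ 2 * (w (i + 1) - w i) ^ 2 ≤
      (v (i + 1) ^ (m' + 1 + (m' + 1) - 1) - v i ^ (m' + 1 + (m' + 1) - 1)) * (v (i + 1) - v i) := by
    intro i
    have h := key_all m' (v (i + 1)) (v i)
    rw [hps, div_mul_eq_mul_div, div_le_iff₀ (by positivity)]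
    calc (2 * (m' : ℝ) + 1) * (w (i + 1) - w i) ^ 2
        ≤ ((m' : ℝ) + 1) ^ 2 * ((v (i + 1) ^ (2 * m' + 1) - v i ^ (2 * m' + 1)) * (v (i + 1) - v i)) := h
      _ = (v (i + 1) ^ (2 * m' + 1) - v i ^ (2 * m' + 1)) * (v (i + 1) - v i) * ((m' : ℝ) + 1) ^ 2 := by
          ring
  have hC : (4 * (((m' + 1 + (m' + 1) : ℕ) : ℝ) - 1) / ((m' + 1 + (m' + 1) : ℕ) : ℝ) ^ 2)
      = (2 * (m' : ℝ) + 1) / ((m' : ℝ) + 1) ^ 2 := by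
    push_cast
    rw [div_eq_div_iff (by positivity) (by positivity)]
    ring
  rw [hC]
  have hCnn : (0 : ℝ) ≤ (2 * (m' : ℝ) + 1) / ((m' : ℝ) + 1) ^ 2 := by positivity
  have main : (2 * (m' : ℝ) + 1) / ((m' : ℝ) + 1) ^ 2 * (∑ i : ZMod N, |v i| ^ (m' + 1 + (m' + 1))) ≤
      ∑ i : ZMod N, ((N : ℝ) * (v (i + 1) ^ (m' + 1 + (m' + 1) - 1) - v i ^ (m' + 1 + (m' + 1) - 1)))
        * ((N : ℝ) * (v (i + 1) - v i)) := by
    calc (2 * (m' : ℝ) + 1) / ((m' : ℝ) + 1) ^ 2 * (∑ i : ZMod N, |v i| ^ (m' + 1 + (m' + 1)))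
        = (2 * (m' : ℝ) + 1) / ((m' : ℝ) + 1) ^ 2 * ∑ i : ZMod N, (w i) ^ 2 := by rw [hS1]
      _ ≤ (2 * (m' : ℝ) + 1) / ((m' : ℝ) + 1) ^ 2 * ((N : ℝ) ^ 2 * ∑ i : ZMod N, (w (i + 1) - w i) ^ 2) :=
          mul_le_mul_of_nonneg_left hpoin hCnn
      _ = ∑ i : ZMod N, (N : ℝ) ^ 2 * ((2 * (m' : ℝ) + 1) / ((m' : ℝ) + 1) ^ 2 * (w (i + 1) - w i) ^ 2) := by
          rw [Finset.mul_sum, Finset.mul_sum]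
          exact Finset.sum_congr rfl fun i _ => by ring
      _ ≤ ∑ i : ZMod N, (N : ℝ) ^ 2 * ((v (i + 1) ^ (m' + 1 + (m' + 1) - 1) - v i ^ (m' + 1 + (m' + 1) - 1)) * (v (i + 1) - v i)) := by
          apply Finset.sum_le_sum
          intro i _
          exact mul_le_mul_of_nonneg_left (hkey i) (by positivity)
      _ = ∑ i : ZMod N, ((N : ℝ) * (v (i + 1) ^ (m' + 1 + (m' + 1) - 1) - v i ^ (m' + 1 + (m' + 1) - 1)))
            * ((N : ℝ) * (v (i + 1) - v i)) := Finset.sum_congr rfl fun i _ => by ring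
  calc (2 * (m' : ℝ) + 1) / ((m' : ℝ) + 1) ^ 2 * ((1 / (N : ℝ)) * ∑ i : ZMod N, |v i| ^ (m' + 1 + (m' + 1)))
      = (1 / (N : ℝ)) * ((2 * (m' : ℝ) + 1) / ((m' : ℝ) + 1) ^ 2 * ∑ i : ZMod N, |v i| ^ (m' + 1 + (m' + 1))) := by
        ring
    _ ≤ _ := mul_le_mul_of_nonneg_left main hNnn
end

section
/- Let b : R^N_0 → R^N_0 satisfy ⟨b(w), w⟩_{ℓ^2} ≤ −ν‖D^{(1,+)} w‖_{ℓ^2}^2 for all w, with ν > 0. If u, v ∈ R^N_0 satisfy the implicit relations u' = u + Δt b(u') and v' = v + Δt b(v') for Δt > 0 (with u', v' ∈ R^N_0), then ‖u'‖_{ℓ^2}^2 + ‖v'‖_{ℓ^2}^2 ≤ (1/(1+2Δtν)) (‖u‖_{ℓ^2}^2 + ‖v‖_{ℓ^2}^2), provided the discrete Poincaré inequality ‖w‖_{ℓ^2} ≤ ‖D^{(1,+)}w‖_{ℓ^2} holds on R^N_0. -/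
lemma one_step_decay (N : ℕ) [NeZero N]
    (b : (ZMod N → ℝ) → (ZMod N → ℝ)) (ν : ℝ) (hν : 0 < ν)
    (hdiss : ∀ w : ZMod N → ℝ, (∑ i : ZMod N, w i) = 0 →
      (1 / (N : ℝ)) * ∑ i : ZMod N, b w i * w i ≤
        -ν * ((1 / (N : ℝ)) * ∑ i : ZMod N, ((N : ℝ) * (w (i + 1) - w i)) ^ 2))
    (hpoinc : ∀ w : ZMod N → ℝ, (∑ i : ZMod N, w i) = 0 →
      (1 / (N : ℝ)) * ∑ i : ZMod N, (w i) ^ 2 ≤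
        (1 / (N : ℝ)) * ∑ i : ZMod N, ((N : ℝ) * (w (i + 1) - w i)) ^ 2)
    (Δt : ℝ) (hΔt : 0 < Δt) (u u' : ZMod N → ℝ)
    (hu'0 : ∑ i : ZMod N, u' i = 0)
    (hu' : ∀ i, u' i = u i + Δt * b u' i) :
    (1 + 2 * Δt * ν) * ((1 / (N : ℝ)) * ∑ i : ZMod N, (u' i) ^ 2) ≤
      (1 / (N : ℝ)) * ∑ i : ZMod N, (u i) ^ 2 := by
  have hNpos : (0 : ℝ) < (N : ℝ) := by
    exact_mod_cast Nat.pos_of_ne_zero (NeZero.ne N)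
  have hinv : (0 : ℝ) < 1 / (N : ℝ) := by positivity
  set A := (1 / (N : ℝ)) * ∑ i : ZMod N, (u' i) ^ 2 with hA
  set B := (1 / (N : ℝ)) * ∑ i : ZMod N, b u' i * u' i with hB
  set C := (1 / (N : ℝ)) * ∑ i : ZMod N, (b u' i) ^ 2 with hC
  set D := (1 / (N : ℝ)) * ∑ i : ZMod N, ((N : ℝ) * (u' (i + 1) - u' i)) ^ 2 with hD
  have hexp : (1 / (N : ℝ)) * ∑ i : ZMod N, (u i) ^ 2
      = A - 2 * Δt * B + Δt ^ 2 * C := by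
    have : ∀ i, (u i) ^ 2 = (u' i) ^ 2 - 2 * Δt * (b u' i * u' i) + Δt ^ 2 * (b u' i) ^ 2 := by
      intro i
      have h : u i = u' i - Δt * b u' i := by linarith [hu' i]
      rw [h]; ring
    simp only [this]
    rw [Finset.sum_add_distrib, Finset.sum_sub_distrib, ← Finset.mul_sum, ← Finset.mul_sum]
    ring
  have h1 : B ≤ -ν * D := hdiss u' hu'0
  have h2 : A ≤ D := hpoinc u' hu'0
  have hC0 : 0 ≤ C := by
    apply mul_nonneg (le_of_lt hinv)
    exact Finset.sum_nonneg fun i _ => sq_nonneg _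
  rw [hexp]
  nlinarith [sq_nonneg Δt, mul_pos hΔt hν]

/-- Geometric decay of the noiseless split-step backward Euler scheme: if `b` is
dissipative in the `h^1` sense and the discrete Poincaré inequality holds, then
two implicit steps satisfy
`‖u'‖² + ‖v'‖² ≤ (1/(1+2Δtν)) (‖u‖² + ‖v‖²)`. -/
theorem split_step_geometric_decay (N : ℕ) [NeZero N]
    (b : (ZMod N → ℝ) → (ZMod N → ℝ)) (ν : ℝ) (hν : 0 < ν)
    (hdiss : ∀ w : ZMod N → ℝ, (∑ i : ZMod N, w i) = 0 →
      (1 / (N : ℝ)) * ∑ i : ZMod N, b w i * w i ≤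
        -ν * ((1 / (N : ℝ)) * ∑ i : ZMod N, ((N : ℝ) * (w (i + 1) - w i)) ^ 2))
    (hpoinc : ∀ w : ZMod N → ℝ, (∑ i : ZMod N, w i) = 0 →
      (1 / (N : ℝ)) * ∑ i : ZMod N, (w i) ^ 2 ≤
        (1 / (N : ℝ)) * ∑ i : ZMod N, ((N : ℝ) * (w (i + 1) - w i)) ^ 2)
    (Δt : ℝ) (hΔt : 0 < Δt) (u v u' v' : ZMod N → ℝ)
    (hu'0 : ∑ i : ZMod N, u' i = 0) (hv'0 : ∑ i : ZMod N, v' i = 0)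
    (hu' : ∀ i, u' i = u i + Δt * b u' i) (hv' : ∀ i, v' i = v i + Δt * b v' i) :
    (1 / (N : ℝ)) * ∑ i : ZMod N, (u' i) ^ 2 + (1 / (N : ℝ)) * ∑ i : ZMod N, (v' i) ^ 2 ≤
      (1 / (1 + 2 * Δt * ν)) *
        ((1 / (N : ℝ)) * ∑ i : ZMod N, (u i) ^ 2 +
          (1 / (N : ℝ)) * ∑ i : ZMod N, (v i) ^ 2) := by
  have hu := one_step_decay N b ν hν hdiss hpoinc Δt hΔt u u' hu'0 hu'
  have hv := one_step_decay N b ν hν hdiss hpoinc Δt hΔt v v' hv'0 hv'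
  have hpos : (0 : ℝ) < 1 + 2 * Δt * ν := by nlinarith
  set L := (1 / (N : ℝ)) * ∑ i : ZMod N, (u' i) ^ 2 + (1 / (N : ℝ)) * ∑ i : ZMod N, (v' i) ^ 2 with hL
  set R := (1 / (N : ℝ)) * ∑ i : ZMod N, (u i) ^ 2 + (1 / (N : ℝ)) * ∑ i : ZMod N, (v i) ^ 2 with hR
  have key : (1 + 2 * Δt * ν) * L ≤ R := by rw [hL, hR]; linarith
  calc L = (1 / (1 + 2 * Δt * ν)) * ((1 + 2 * Δt * ν) * L) := by field_simp
    _ ≤ (1 / (1 + 2 * Δt * ν)) * R :=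
        mul_le_mul_of_nonneg_left key (by positivity)
end

section
/- Let v ∈ R^N with ∑_i v_i = 0, and define w ∈ R^N by w_i = sign(v_i)|v_i|^{p/2} for an even positive integer p, where sign(z) = 1 if z ≥ 0, −1 otherwise. Then ‖w‖_{ℓ^2}^2 ≤ ‖D^{(1,+)} w‖_{ℓ^2}^2, i.e., (1/N)∑_i w_i^2 ≤ N ∑_i (w_{i+1} − w_i)^2 (cyclic indexing), even though w need not have zero mean. -/
private lemma tel_bound (N : ℕ) (w : ZMod N → ℝ) (j : ZMod N) (m : ℕ) :
    |w (j + (m : ZMod N)) - w j| ≤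
      ∑ k ∈ Finset.range m, |w (j + (k : ZMod N) + 1) - w (j + (k : ZMod N))| := by
  induction m with
  | zero => simp
  | succ m ih =>
    rw [Finset.sum_range_succ]
    have : w (j + ((m + 1 : ℕ) : ZMod N)) - w j =
        (w (j + (m : ZMod N) + 1) - w (j + (m : ZMod N))) + (w (j + (m : ZMod N)) - w j) := by
      push_cast
      ring_nf
    rw [this]
    calc _ ≤ |w (j + (m : ZMod N) + 1) - w (j + (m : ZMod N))| + |w (j + (m : ZMod N)) - w j| :=
          abs_add_le _ _
      _ ≤ _ := by linarith [ih]

/-- Key step in the ℓ^p Poincaré inequality: for a zero-mean `v` and the signed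
power vector `w_i = sign(v_i)|v_i|^{p/2}`, one has `‖w‖² ≤ ‖D^{(1,+)} w‖²`
even though `w` need not have zero mean. -/
theorem signed_power_poincare (N : ℕ) [NeZero N] (v : ZMod N → ℝ)
    (hv : ∑ i : ZMod N, v i = 0) (p : ℕ) (hp : Even p) (hp0 : 0 < p)
    (w : ZMod N → ℝ)
    (hw : ∀ i, w i = (if 0 ≤ v i then (1 : ℝ) else -1) * |v i| ^ (p / 2)) :
    (1 / (N : ℝ)) * ∑ i : ZMod N, (w i) ^ 2 ≤
      (1 / (N : ℝ)) * ∑ i : ZMod N, ((N : ℝ) * (w (i + 1) - w i)) ^ 2 := by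
  have hN : 0 < N := Nat.pos_of_ne_zero (NeZero.ne N)
  set S : ℝ := ∑ t : ZMod N, |w (t + 1) - w t| with hS
  -- reindexing lemma: sum over range N of shifted differences equals S
  have hreindex : ∀ j : ZMod N,
      ∑ k ∈ Finset.range N, |w (j + (k : ZMod N) + 1) - w (j + (k : ZMod N))| = S := by
    intro j
    rw [hS]
    refine Finset.sum_nbij' (i := fun k => j + (k : ZMod N)) (j := fun t => (t - j).val)
      ?_ ?_ ?_ ?_ ?_
    · intro a _; exact Finset.mem_univ _
    · intro t _; exact Finset.mem_range.2 (ZMod.val_lt _)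
    · intro k hk
      simp only [add_sub_cancel_left]
      exact ZMod.val_cast_of_lt (Finset.mem_range.1 hk)
    · intro t _
      rw [ZMod.natCast_rightInverse (t - j)]
      ring
    · intro k _; rfl
  -- everyone's distance bound
  have hdist : ∀ i j : ZMod N, |w i - w j| ≤ S := by
    intro i j
    have h1 : i = j + (((i - j).val : ℕ) : ZMod N) := by
      rw [ZMod.natCast_rightInverse (i - j)]; ring
    calc |w i - w j| = |w (j + (((i - j).val : ℕ) : ZMod N)) - w j| := by rw [← h1]
      _ ≤ ∑ k ∈ Finset.range (i - j).val,
            |w (j + (k : ZMod N) + 1) - w (j + (k : ZMod N))| := tel_bound N w j _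
      _ ≤ ∑ k ∈ Finset.range N,
            |w (j + (k : ZMod N) + 1) - w (j + (k : ZMod N))| := by
          apply Finset.sum_le_sum_of_subset_of_nonneg
          · exact Finset.range_subset_range.2 (ZMod.val_lt _).le
          · intros; positivity
      _ = S := hreindex j
  -- existence of nonneg and nonpos entries of v
  have hpos : ∃ a : ZMod N, 0 ≤ v a := by
    by_contra h
    push_neg at h
    have : ∑ i : ZMod N, v i < 0 :=
      Finset.sum_neg (fun i _ => h i) Finset.univ_nonempty
    linarith
  have hneg : ∃ b : ZMod N, v b ≤ 0 := by
    by_contra h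
    push_neg at h
    have : 0 < ∑ i : ZMod N, v i :=
      Finset.sum_pos (fun i _ => h i) Finset.univ_nonempty
    linarith
  obtain ⟨a, ha⟩ := hpos
  obtain ⟨b, hb⟩ := hneg
  have hwa : 0 ≤ w a := by rw [hw a, if_pos ha]; positivity
  have hwb : w b ≤ 0 := by
    rw [hw b]
    rcases le_or_gt 0 (v b) with h | h
    · have hvb : v b = 0 := le_antisymm hb h
      have hp2 : p / 2 ≠ 0 := by
        rcases hp with ⟨k, hk⟩; omega
      rw [if_pos h, hvb, abs_zero, zero_pow hp2]
      simp
    · rw [if_neg (not_le.2 h)]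
      have : (0:ℝ) ≤ |v b| ^ (p / 2) := by positivity
      linarith
  -- |w i| ≤ S for all i
  have hwS : ∀ i : ZMod N, |w i| ≤ S := by
    intro i
    rcases le_or_gt 0 (w i) with h | h
    · calc |w i| = w i := abs_of_nonneg h
        _ ≤ w i - w b := by linarith
        _ ≤ |w i - w b| := le_abs_self _
        _ ≤ S := hdist i b
    · calc |w i| = -(w i) := abs_of_neg h
        _ ≤ w a - w i := by linarith
        _ ≤ |w a - w i| := le_abs_self _
        _ ≤ S := hdist a i
  have hS0 : 0 ≤ S := le_trans (abs_nonneg _) (hwS a)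
  -- Cauchy–Schwarz: S² ≤ N * ∑ Δ²
  have hCS : S ^ 2 ≤ (N : ℝ) * ∑ i : ZMod N, (w (i + 1) - w i) ^ 2 := by
    have := sq_sum_le_card_mul_sum_sq (s := (Finset.univ : Finset (ZMod N)))
      (f := fun t => |w (t + 1) - w t|)
    simp only [Finset.card_univ, ZMod.card, sq_abs] at this
    exact this
  have hsum : ∑ i : ZMod N, (w i) ^ 2 ≤ (N : ℝ) * S ^ 2 := by
    calc ∑ i : ZMod N, (w i) ^ 2 ≤ ∑ _i : ZMod N, S ^ 2 := by
          apply Finset.sum_le_sum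
          intro i _
          calc (w i) ^ 2 = |w i| ^ 2 := (sq_abs _).symm
            _ ≤ S ^ 2 := by
                apply pow_le_pow_left₀ (abs_nonneg _) (hwS i)
      _ = (N : ℝ) * S ^ 2 := by
          rw [Finset.sum_const, Finset.card_univ, ZMod.card, nsmul_eq_mul]
  have hrhs : ∑ i : ZMod N, ((N : ℝ) * (w (i + 1) - w i)) ^ 2
      = (N : ℝ) ^ 2 * ∑ i : ZMod N, (w (i + 1) - w i) ^ 2 := by
    rw [Finset.mul_sum]
    apply Finset.sum_congr rfl
    intros; ring
  have hmain : ∑ i : ZMod N, (w i) ^ 2 ≤ ∑ i : ZMod N, ((N : ℝ) * (w (i + 1) - w i)) ^ 2 := by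
    rw [hrhs]
    calc ∑ i : ZMod N, (w i) ^ 2 ≤ (N : ℝ) * S ^ 2 := hsum
      _ ≤ (N : ℝ) * ((N : ℝ) * ∑ i : ZMod N, (w (i + 1) - w i) ^ 2) := by
          apply mul_le_mul_of_nonneg_left hCS (by positivity)
      _ = (N : ℝ) ^ 2 * ∑ i : ZMod N, (w (i + 1) - w i) ^ 2 := by ring
  apply mul_le_mul_of_nonneg_left hmain
  positivity
end

section
/- For any even positive integer p and any reals a, b, one has (b − a)(b^{p-1} − a^{p-1}) ≥ (2/p)^2 (p−1) (sign(b)|b|^{p/2} − sign(a)|a|^{p/2})^2. -/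
/-!
Write `p = 2k + 2` and `φ z = z * |z| ^ k`, so that `sign(z)|z|^{p/2} = φ z` and
`φ' = (k + 1) |z| ^ k`. Then `φ b - φ a = (k + 1) ∫_a^b |z|^k`, and Cauchy–Schwarz bounds
`(∫_a^b |z|^k)^2` by `(b - a) ∫_a^b z^{2k} = (b - a)(b^{2k+1} - a^{2k+1}) / (2k + 1)`.
-/

open Filter Topology intervalIntegral

theorem sq_intervalIntegral_le_mul_intervalIntegral_sq {f : ℝ → ℝ} {a b : ℝ}
    (hf : IntervalIntegrable f MeasureTheory.volume a b)
    (hf2 : IntervalIntegrable (fun x => f x ^ 2) MeasureTheory.volume a b) :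
    (∫ x in a..b, f x) ^ 2 ≤ (b - a) * ∫ x in a..b, f x ^ 2 := by
  wlog hab : a ≤ b generalizing a b
  · have := this hf.symm hf2.symm (le_of_not_ge hab)
    rw [integral_symm a b, integral_symm a b, neg_sq] at this
    linarith
  have hquad : ∀ t : ℝ, 0 ≤ (b - a) * (t * t) + (-2 * ∫ x in a..b, f x) * t +
      ∫ x in a..b, f x ^ 2 := by
    intro t
    have hexpand : ∫ x in a..b, (f x - t) ^ 2 =
        (b - a) * (t * t) + (-2 * ∫ x in a..b, f x) * t + ∫ x in a..b, f x ^ 2 := by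
      simp_rw [sub_sq]
      rw [integral_add (hf2.sub ((hf.const_mul 2).mul_const t)) intervalIntegrable_const,
        integral_sub hf2 ((hf.const_mul 2).mul_const t), integral_mul_const,
        integral_const_mul, intervalIntegral.integral_const, smul_eq_mul]
      ring
    exact hexpand ▸ integral_nonneg hab fun x _ => sq_nonneg _
  have := discrim_le_zero hquad
  rw [discrim] at this
  linarith

theorem hasDerivAt_mul_abs_pow (k : ℕ) (x : ℝ) :
    HasDerivAt (fun z : ℝ => z * |z| ^ k) ((k + 1) * |x| ^ k) x := by
  rcases lt_trichotomy x 0 with hx | rfl | hx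
  · have hloc : (fun z : ℝ => -(-z) ^ (k + 1)) =ᶠ[𝓝 x] fun z => z * |z| ^ k := by
      filter_upwards [eventually_lt_nhds hx] with z hz
      rw [abs_of_neg hz, pow_succ]
      ring
    refine (((hasDerivAt_neg x).pow (k + 1)).neg.congr_of_eventuallyEq hloc.symm).congr_deriv ?_
    rw [abs_of_neg hx]
    push_cast
    ring
  · rw [hasDerivAt_iff_tendsto_slope]
    have hslope : (fun z : ℝ => |z| ^ k) =ᶠ[𝓝[≠] 0] slope (fun z : ℝ => z * |z| ^ k) 0 := by
      filter_upwards [self_mem_nhdsWithin] with z hz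
      simp [slope_def_field, show z ≠ 0 from hz]
    refine (tendsto_nhdsWithin_of_tendsto_nhds ?_).congr' hslope
    have hval : ((k : ℝ) + 1) * |0| ^ k = |0| ^ k := by cases k <;> simp
    rw [hval]
    exact (continuous_abs.pow k).tendsto 0
  · have hloc : (fun z : ℝ => z ^ (k + 1)) =ᶠ[𝓝 x] fun z => z * |z| ^ k := by
      filter_upwards [eventually_gt_nhds hx] with z hz
      rw [abs_of_pos hz, pow_succ']
    refine ((hasDerivAt_pow (k + 1) x).congr_of_eventuallyEq hloc.symm).congr_deriv ?_
    rw [abs_of_pos hx]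
    push_cast
    ring

theorem add_one_mul_integral_abs_pow (k : ℕ) (a b : ℝ) :
    (k + 1) * ∫ z in a..b, |z| ^ k = b * |b| ^ k - a * |a| ^ k := by
  rw [← integral_const_mul]
  exact integral_eq_sub_of_hasDerivAt (fun x _ => hasDerivAt_mul_abs_pow k x)
    ((continuous_const.mul (continuous_abs.pow k)).intervalIntegrable a b)

theorem mul_sq_sub_mul_abs_pow_le (k : ℕ) (a b : ℝ) :
    (2 * k + 1) * (b * |b| ^ k - a * |a| ^ k) ^ 2 ≤
      (k + 1) ^ 2 * ((b - a) * (b ^ (2 * k + 1) - a ^ (2 * k + 1))) := by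
  have hcs := sq_intervalIntegral_le_mul_intervalIntegral_sq (f := fun z => |z| ^ k)
    ((continuous_abs.pow k).intervalIntegrable a b)
    (((continuous_abs.pow k).pow 2).intervalIntegrable a b)
  have hsq : ∫ z in a..b, (|z| ^ k) ^ 2 = (b ^ (2 * k + 1) - a ^ (2 * k + 1)) / (2 * k + 1) := by
    have hpt : ∀ z : ℝ, (|z| ^ k) ^ 2 = z ^ (2 * k) := fun z => by
      rw [← pow_mul, mul_comm, (even_two_mul k).pow_abs]
    simp_rw [hpt, integral_pow]
    push_cast
    rfl
  rw [hsq, ← mul_div_assoc, le_div_iff₀ (by positivity)] at hcs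
  rw [← add_one_mul_integral_abs_pow]
  calc _ = ((k : ℝ) + 1) ^ 2 * ((∫ z in a..b, |z| ^ k) ^ 2 * (2 * k + 1)) := by ring
    _ ≤ _ := by gcongr

theorem sign_mul_abs_pow_succ (k : ℕ) (x : ℝ) :
    (if 0 ≤ x then (1 : ℝ) else -1) * |x| ^ (k + 1) = x * |x| ^ k := by
  split_ifs with hx
  · rw [abs_of_nonneg hx, pow_succ']; ring
  · rw [abs_of_neg (not_le.mp hx), pow_succ']; ring

/-- Pointwise inequality underlying the discrete ℓ^p Poincaré inequality:
`(b - a)(b^{p-1} - a^{p-1}) ≥ (2/p)² (p-1) (sign(b)|b|^{p/2} - sign(a)|a|^{p/2})²`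
for even positive integers `p`. -/
theorem pointwise_power_inequality (p : ℕ) (hp : Even p) (hp0 : 0 < p) (a b : ℝ) :
    (2 / (p : ℝ)) ^ 2 * ((p : ℝ) - 1) *
        ((if 0 ≤ b then (1 : ℝ) else -1) * |b| ^ (p / 2) -
          (if 0 ≤ a then (1 : ℝ) else -1) * |a| ^ (p / 2)) ^ 2 ≤
      (b - a) * (b ^ (p - 1) - a ^ (p - 1)) := by
  obtain ⟨k, rfl⟩ : ∃ k, p = 2 * k + 2 := ⟨p / 2 - 1, by rcases hp with ⟨r, rfl⟩; omega⟩
  rw [show (2 * k + 2) / 2 = k + 1 by omega, show 2 * k + 2 - 1 = 2 * k + 1 by omega,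
    sign_mul_abs_pow_succ, sign_mul_abs_pow_succ]
  calc _ = (2 * k + 1) * (b * |b| ^ k - a * |a| ^ k) ^ 2 / (k + 1) ^ 2 := by
        push_cast
        field_simp
        ring
    _ ≤ _ := (div_le_iff₀' (by positivity)).mpr (mul_sq_sub_mul_abs_pow_le k a b)
end

section
/- Let Ā : R^2 → R be C^1 with 0 ≤ ∂_1 Ā(v,w) ≤ C(1 + |v|^p) and −C(1 + |w|^p) ≤ ∂_2 Ā(v,w) ≤ 0 for all v, w ∈ R. Then for any v ∈ R^N indexed cyclically by Z/NZ, the discrete flux-difference satisfies: N ∑_{i∈T_N} (Ā(v_i, v_{i+1}) − Ā(v_{i-1}, v_i))^2 ≤ 8C^2 ( N ∑_i (v_i − v_{i-1})^2 + N ∑_i (v_i − v_{i-1}) ∫_{v_{i-1}}^{v_i} |z|^{2p} dz ). -/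
/-!
Split `Ā(v_i, v_{i+1}) - Ā(v_{i-1}, v_i)` at the corner `Ā(v_i, v_i)` into an integral of `∂₁Ā`
over `[v_{i-1}, v_i]` and one of `∂₂Ā` over `[v_i, v_{i+1}]`. By Cauchy–Schwarz each squared
integral is at most `(b - a) ∫_a^b C² (1 + |z|^p)² ≤ 2C² (b - a) ∫_a^b (1 + |z|^{2p})`, and after
a cyclic shift the two families of edges `(v_{i-1}, v_i)`, `(v_i, v_{i+1})` give the same sum.
-/

open intervalIntegral Function Finset

section CauchySchwarz

variable {f g : ℝ → ℝ}

theorem sq_intervalIntegral_le_of_le (hf : Continuous f) {a b : ℝ} (hab : a ≤ b) :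
    (∫ z in a..b, f z) ^ 2 ≤ (b - a) * ∫ z in a..b, f z ^ 2 := by
  -- `0 ≤ ∫ ((b - a) f - ∫ f)²` is the discriminant form of Cauchy–Schwarz.
  have hexpand : ∫ z in a..b, ((b - a) * f z - ∫ w in a..b, f w) ^ 2
      = (b - a) * ((b - a) * (∫ z in a..b, f z ^ 2) - (∫ z in a..b, f z) ^ 2) := by
    have hi : ∀ g : ℝ → ℝ, Continuous g → IntervalIntegrable g MeasureTheory.volume a b :=
      fun g hg => hg.intervalIntegrable a b
    simp_rw [sub_sq, mul_pow]
    rw [integral_add (hi _ (by fun_prop)) intervalIntegrable_const,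
      integral_sub (hi _ (by fun_prop)) (hi _ (by fun_prop))]
    simp only [integral_const_mul, integral_mul_const, integral_const, smul_eq_mul]
    ring
  have hnonneg := hexpand ▸ integral_nonneg hab fun z _ =>
    sq_nonneg ((b - a) * f z - ∫ w in a..b, f w)
  rcases hab.eq_or_lt with rfl | hlt
  · simp
  · exact sub_nonneg.1 (nonneg_of_mul_nonneg_right hnonneg (sub_pos.2 hlt))

theorem sq_intervalIntegral_le (hf : Continuous f) (a b : ℝ) :
    (∫ z in a..b, f z) ^ 2 ≤ (b - a) * ∫ z in a..b, f z ^ 2 := by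
  rcases le_total a b with hab | hba
  · exact sq_intervalIntegral_le_of_le hf hab
  · rw [integral_symm, neg_sq, integral_symm b, mul_neg, ← neg_mul, neg_sub]
    exact sq_intervalIntegral_le_of_le hf hba

theorem mul_intervalIntegral_mono (hf : Continuous f) (hg : Continuous g) (hfg : ∀ z, f z ≤ g z)
    (a b : ℝ) : (b - a) * ∫ z in a..b, f z ≤ (b - a) * ∫ z in a..b, g z := by
  have hmono : ∀ {a b : ℝ}, a ≤ b → ∫ z in a..b, f z ≤ ∫ z in a..b, g z := fun hab =>
    integral_mono_on hab (hf.intervalIntegrable _ _) (hg.intervalIntegrable _ _) fun z _ => hfg z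
  rcases le_total a b with hab | hba
  · exact mul_le_mul_of_nonneg_left (hmono hab) (sub_nonneg.2 hab)
  · rw [integral_symm b, integral_symm b, mul_neg, mul_neg, neg_le_neg_iff]
    exact mul_le_mul_of_nonpos_left (hmono hba) (sub_nonpos.2 hba)

theorem sq_intervalIntegral_le_of_abs_le (hf : Continuous f) (hg : Continuous g)
    (hfg : ∀ z, |f z| ≤ g z) (a b : ℝ) :
    (∫ z in a..b, f z) ^ 2 ≤ (b - a) * ∫ z in a..b, g z ^ 2 :=
  (sq_intervalIntegral_le hf a b).trans <| mul_intervalIntegral_mono (hf.pow 2) (hg.pow 2)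
    (fun z => sq_le_sq' (abs_le.1 (hfg z)).1 (abs_le.1 (hfg z)).2) a b

end CauchySchwarz

theorem mul_intervalIntegral_sq_const_mul_one_add_pow_le (C : ℝ) (p : ℕ) (a b : ℝ) :
    (b - a) * ∫ z in a..b, (C * (1 + |z| ^ p)) ^ 2
      ≤ 2 * C ^ 2 * ((b - a) ^ 2 + (b - a) * ∫ z in a..b, |z| ^ (2 * p)) := by
  have hpoint : ∀ z : ℝ, (C * (1 + |z| ^ p)) ^ 2 ≤ 2 * C ^ 2 * (1 + |z| ^ (2 * p)) := fun z => by
    rw [mul_pow, pow_mul', mul_assoc, mul_left_comm]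
    gcongr
    simpa using add_sq_le (a := (1 : ℝ)) (b := |z| ^ p)
  calc (b - a) * ∫ z in a..b, (C * (1 + |z| ^ p)) ^ 2
      ≤ (b - a) * ∫ z in a..b, 2 * C ^ 2 * (1 + |z| ^ (2 * p)) :=
        mul_intervalIntegral_mono (by fun_prop) (by fun_prop) hpoint a b
    _ = 2 * C ^ 2 * ((b - a) ^ 2 + (b - a) * ∫ z in a..b, |z| ^ (2 * p)) := by
        rw [integral_const_mul, integral_add intervalIntegrable_const
          ((by fun_prop : Continuous fun z : ℝ => |z| ^ (2 * p)).intervalIntegrable a b), integral_const, smul_eq_mul]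
        ring

theorem integral_deriv_eq_sub_of_contDiff {f : ℝ → ℝ} (hf : ContDiff ℝ 1 f) (a b : ℝ) :
    ∫ z in a..b, deriv f z = f b - f a :=
  integral_deriv_eq_sub (fun x _ => hf.differentiable one_ne_zero x)
    (hf.continuous_deriv_one.intervalIntegrable a b)

section PartialDerivatives

variable {A : ℝ → ℝ → ℝ}

theorem contDiff_uncurry_left (hA : ContDiff ℝ 1 (uncurry A)) (w : ℝ) :
    ContDiff ℝ 1 fun x => A x w :=
  hA.comp (contDiff_prodMk_left w)

theorem contDiff_uncurry_right (hA : ContDiff ℝ 1 (uncurry A)) (v : ℝ) :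
    ContDiff ℝ 1 fun y => A v y :=
  hA.comp (contDiff_prodMk_right v)

theorem sub_eq_integral_deriv_left_add_integral_deriv_right (hA : ContDiff ℝ 1 (uncurry A))
    (a b c : ℝ) :
    A b c - A a b
      = (∫ z in a..b, deriv (fun x => A x b) z) + ∫ z in b..c, deriv (fun y => A b y) z := by
  rw [integral_deriv_eq_sub_of_contDiff (contDiff_uncurry_left hA b),
    integral_deriv_eq_sub_of_contDiff (contDiff_uncurry_right hA b)]
  ring

theorem sq_sub_le_of_abs_deriv_le (hA : ContDiff ℝ 1 (uncurry A)) {g : ℝ → ℝ}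
    (hg : Continuous g) (h₁ : ∀ v w, |deriv (fun x => A x w) v| ≤ g v)
    (h₂ : ∀ v w, |deriv (fun y => A v y) w| ≤ g w) (a b c : ℝ) :
    (A b c - A a b) ^ 2
      ≤ 2 * ((b - a) * (∫ z in a..b, g z ^ 2) + (c - b) * ∫ z in b..c, g z ^ 2) := by
  rw [sub_eq_integral_deriv_left_add_integral_deriv_right hA]
  refine add_sq_le.trans ?_
  gcongr
  · exact sq_intervalIntegral_le_of_abs_le (contDiff_uncurry_left hA b).continuous_deriv_one hg
      (h₁ · b) a b
  · exact sq_intervalIntegral_le_of_abs_le (contDiff_uncurry_right hA b).continuous_deriv_one hg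
      (h₂ b) b c

end PartialDerivatives

theorem flux_difference_bound_general (N : ℕ) [NeZero N] (Ab : ℝ → ℝ → ℝ)
    (hAb : ContDiff ℝ 1 (Function.uncurry Ab))
    (C : ℝ) (p : ℕ)
    (h1l : ∀ v w : ℝ, 0 ≤ deriv (fun x => Ab x w) v)
    (h1u : ∀ v w : ℝ, deriv (fun x => Ab x w) v ≤ C * (1 + |v| ^ p))
    (h2l : ∀ v w : ℝ, -(C * (1 + |w| ^ p)) ≤ deriv (fun y => Ab v y) w)
    (h2u : ∀ v w : ℝ, deriv (fun y => Ab v y) w ≤ 0)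
    (v : ZMod N → ℝ) :
    (N : ℝ) * ∑ i : ZMod N, (Ab (v i) (v (i + 1)) - Ab (v (i - 1)) (v i)) ^ 2 ≤
      8 * C ^ 2 *
        ((N : ℝ) * ∑ i : ZMod N, (v i - v (i - 1)) ^ 2 +
          (N : ℝ) * ∑ i : ZMod N,
            (v i - v (i - 1)) * ∫ z in (v (i - 1))..(v i), |z| ^ (2 * p)) := by
  set F : ℝ → ℝ → ℝ := fun a b => (b - a) * ∫ z in a..b, (C * (1 + |z| ^ p)) ^ 2
  have hpoint (i : ZMod N) := sq_sub_le_of_abs_deriv_le hAb (g := fun z => C * (1 + |z| ^ p))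
    (by fun_prop) (fun v w => abs_le.2 ⟨by linarith [h1l v w, h1u v w], h1u v w⟩)
    (fun v w => abs_le.2 ⟨h2l v w, by linarith [h2l v w, h2u v w]⟩) (v (i - 1)) (v i) (v (i + 1))
  have hshift : ∑ i : ZMod N, F (v i) (v (i + 1)) = ∑ i : ZMod N, F (v (i - 1)) (v i) :=
    Fintype.sum_equiv (Equiv.addRight 1) _ _ fun i => by simp
  calc (N : ℝ) * ∑ i : ZMod N, (Ab (v i) (v (i + 1)) - Ab (v (i - 1)) (v i)) ^ 2
      ≤ N * ∑ i : ZMod N, 2 * (F (v (i - 1)) (v i) + F (v i) (v (i + 1))) := by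
        gcongr with i; exact hpoint i
    _ = N * (4 * ∑ i : ZMod N, F (v (i - 1)) (v i)) := by
        rw [← mul_sum, sum_add_distrib, hshift]; ring
    _ ≤ N * (4 * ∑ i : ZMod N, 2 * C ^ 2 * ((v i - v (i - 1)) ^ 2
          + (v i - v (i - 1)) * ∫ z in (v (i - 1))..(v i), |z| ^ (2 * p))) := by
        gcongr with i; exact mul_intervalIntegral_sq_const_mul_one_add_pow_le C p _ _
    _ = _ := by rw [← mul_sum, sum_add_distrib]; ring

/-- Flux bound used in the `h²` estimate on the invariant measure: if the
numerical flux `Ā` is `C¹` with `0 ≤ ∂₁Ā(v,w) ≤ C(1+|v|^p)` and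
`-C(1+|w|^p) ≤ ∂₂Ā(v,w) ≤ 0`, then
`N ∑_i (Ā(v_i, v_{i+1}) - Ā(v_{i-1}, v_i))² ≤
  8C² (N ∑_i (v_i - v_{i-1})² + N ∑_i (v_i - v_{i-1}) ∫_{v_{i-1}}^{v_i} |z|^{2p} dz)`. -/
theorem flux_difference_bound (N : ℕ) [NeZero N] (Ab : ℝ → ℝ → ℝ)
    (hAb : ContDiff ℝ 1 (Function.uncurry Ab))
    (C : ℝ) (hC : 0 < C) (p : ℕ) (hp : 1 ≤ p)
    (h1l : ∀ v w : ℝ, 0 ≤ deriv (fun x => Ab x w) v)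
    (h1u : ∀ v w : ℝ, deriv (fun x => Ab x w) v ≤ C * (1 + |v| ^ p))
    (h2l : ∀ v w : ℝ, -(C * (1 + |w| ^ p)) ≤ deriv (fun y => Ab v y) w)
    (h2u : ∀ v w : ℝ, deriv (fun y => Ab v y) w ≤ 0)
    (v : ZMod N → ℝ) :
    (N : ℝ) * ∑ i : ZMod N, (Ab (v i) (v (i + 1)) - Ab (v (i - 1)) (v i)) ^ 2 ≤
      8 * C ^ 2 *
        ((N : ℝ) * ∑ i : ZMod N, (v i - v (i - 1)) ^ 2 +
          (N : ℝ) * ∑ i : ZMod N,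
            (v i - v (i - 1)) * ∫ z in (v (i - 1))..(v i), |z| ^ (2 * p)) :=
  flux_difference_bound_general N Ab hAb C p h1l h1u h2l h2u v
end
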